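/- For every natural number n, the even-indexed zigzag number equals the absolute value of the Euler number: A_{2n} = |E_{2n}|, where E_{2n} are the Euler (secant) numbers defined by sec x = \sum_{n\ge 0} (-1)^n E_{2n} x^{2n}/(2n)!. -/
import Mathlib


/-- An ascending alternating (zigzag) permutation of `{1,…,n}`:
`σ 1 < σ 2 > σ 3 < σ 4 > ⋯` (here 0-indexed on `Fin n`). -/
def IsAlternating {n : ℕ} (σ : Equiv.Perm (Fin n)) : Prop :=
  ∀ i : Fin n, ∀ h : (i : ℕ) + 1 < n,
    if (i : ℕ) % 2 = 0 then σ i < σ ⟨(i : ℕ) + 1, h⟩ else σ ⟨(i : ℕ) + 1, h⟩ < σ i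

/-- The zigzag number `A n`, the number of alternating permutations of `{1,…,n}`. -/
noncomputable def zigzag (n : ℕ) : ℕ := Nat.card {σ : Equiv.Perm (Fin n) // IsAlternating σ}

/-- Stirling numbers of the second kind. -/
def stirling2 : ℕ → ℕ → ℕ
  | 0, 0 => 1
  | 0, _ + 1 => 0
  | _ + 1, 0 => 0
  | n + 1, k + 1 => (k + 1) * stirling2 n (k + 1) + stirling2 n k

/-- Unsigned Stirling numbers of the first kind. -/
def stirling1 : ℕ → ℕ → ℕ
  | 0, 0 => 1
  | 0, _ + 1 => 0
  | _ + 1, 0 => 0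
  | n + 1, k + 1 => n * stirling1 n (k + 1) + stirling1 n k

/-- Euler (secant) numbers: `sech x = ∑ eulerNumber n x^(2n)/(2n)!`,
equivalently `sec x = ∑ (-1)^n eulerNumber n x^(2n)/(2n)!`. -/
def eulerNumber : ℕ → ℤ
  | 0 => 1
  | n + 1 =>
      - ∑ k ∈ (Finset.range (n + 1)).attach,
          (Nat.choose (2 * (n + 1)) (2 * k.1) : ℤ) * eulerNumber k.1
  decreasing_by exact Finset.mem_range.mp k.2

namespace ZZ

open Finset Equiv

/-- value sequence of a permutation, as a `ℕ`-valued function. -/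
def s {N : ℕ} (σ : Perm (Fin N)) (i : ℕ) : ℕ :=
  if h : i < N then (σ ⟨i, h⟩ : ℕ) else 0

/-- the first `m` entries alternate (up-down, starting up). -/
def AltP {N : ℕ} (σ : Perm (Fin N)) (m : ℕ) : Prop :=
  ∀ i, i + 1 < m → (if i % 2 = 0 then s σ i < s σ (i + 1) else s σ (i + 1) < s σ i)

/-- entries from position `m` on are increasing. -/
def IncF {N : ℕ} (σ : Perm (Fin N)) (m : ℕ) : Prop :=
  ∀ i, m ≤ i → i + 1 < N → s σ i < s σ (i + 1)

lemma s_lt_iff {N : ℕ} (σ : Perm (Fin N)) {i j : ℕ} (hi : i < N) (hj : j < N) :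
    s σ i < s σ j ↔ σ ⟨i, hi⟩ < σ ⟨j, hj⟩ := by
  simp only [s, dif_pos hi, dif_pos hj, Fin.lt_iff_val_lt_val]

lemma isAlternating_iff {N : ℕ} (σ : Perm (Fin N)) : IsAlternating σ ↔ AltP σ N := by
  constructor
  · intro H i hi
    have hiN : i < N := by omega
    have := H ⟨i, hiN⟩ hi
    by_cases he : i % 2 = 0
    · rw [if_pos he] at this ⊢
      exact (s_lt_iff σ hiN hi).mpr this
    · rw [if_neg he] at this ⊢
      exact (s_lt_iff σ hi hiN).mpr this
  · intro H i hi
    have := H i hi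
    by_cases he : (i : ℕ) % 2 = 0
    · rw [if_pos he] at this ⊢
      exact (s_lt_iff σ i.isLt hi).mp this
    · rw [if_neg he] at this ⊢
      exact (s_lt_iff σ hi i.isLt).mp this

lemma s_inj {N : ℕ} (σ : Perm (Fin N)) {i j : ℕ} (hi : i < N) (hj : j < N)
    (h : s σ i = s σ j) : i = j := by
  simp only [s, hi, hj, dif_pos] at h
  have : σ ⟨i, hi⟩ = σ ⟨j, hj⟩ := Fin.ext h
  have := σ.injective this
  exact congrArg Fin.val (this)

section counting

variable {N m : ℕ}

lemma compl_card {S : Finset (Fin N)} (hS : S.card = m) : Sᶜ.card = N - m := by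
  rw [Finset.card_compl, hS, Fintype.card_fin]

/-- Build a permutation from a value set `S` (for the first `m` slots, in the relative
order prescribed by `τ`) and the complement in increasing order afterwards. -/
def buildFun (hm : m ≤ N) (S : Finset (Fin N)) (hS : S.card = m) (τ : Perm (Fin m)) :
    Fin N → Fin N := fun i =>
  if h : (i : ℕ) < m then S.orderEmbOfFin hS (τ ⟨i, h⟩)
  else Sᶜ.orderEmbOfFin (compl_card hS) ⟨(i : ℕ) - m, by have := i.isLt; omega⟩

lemma buildFun_injective (hm : m ≤ N) (S : Finset (Fin N)) (hS : S.card = m)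
    (τ : Perm (Fin m)) : Function.Injective (buildFun hm S hS τ) := by
  intro i j hij
  unfold buildFun at hij
  split_ifs at hij with hi hj hj
  · have := (S.orderEmbOfFin hS).injective hij
    have := τ.injective this
    simp only [Fin.mk.injEq] at this
    exact Fin.ext this
  · have memS := S.orderEmbOfFin_mem hS (τ ⟨i, hi⟩)
    have memC := Sᶜ.orderEmbOfFin_mem (compl_card hS)
      ⟨(j : ℕ) - m, by have := j.isLt; omega⟩
    rw [hij] at memS
    exact absurd memS (Finset.mem_compl.mp memC)
  · have memS := S.orderEmbOfFin_mem hS (τ ⟨j, hj⟩)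
    have memC := Sᶜ.orderEmbOfFin_mem (compl_card hS)
      ⟨(i : ℕ) - m, by have := i.isLt; omega⟩
    rw [hij] at memC
    exact absurd memS (Finset.mem_compl.mp memC)
  · have := (Sᶜ.orderEmbOfFin (compl_card hS)).injective hij
    have h2 : (i : ℕ) - m = (j : ℕ) - m := congrArg Fin.val this
    exact Fin.ext (by omega)

noncomputable def build (hm : m ≤ N) (S : Finset (Fin N)) (hS : S.card = m)
    (τ : Perm (Fin m)) : Perm (Fin N) :=
  Equiv.ofBijective _ ((Finite.injective_iff_bijective).1 (buildFun_injective hm S hS τ))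

lemma build_apply (hm : m ≤ N) (S : Finset (Fin N)) (hS : S.card = m) (τ : Perm (Fin m))
    (i : Fin N) : build hm S hS τ i = buildFun hm S hS τ i := rfl

lemma build_eq_lt (hm : m ≤ N) (S : Finset (Fin N)) (hS : S.card = m) (τ : Perm (Fin m))
    {i : ℕ} (hi : i < m) (hiN : i < N) :
    build hm S hS τ ⟨i, hiN⟩ = S.orderEmbOfFin hS (τ ⟨i, hi⟩) := by
  show buildFun hm S hS τ ⟨i, hiN⟩ = _
  unfold buildFun
  exact dif_pos hi

lemma build_eq_ge (hm : m ≤ N) (S : Finset (Fin N)) (hS : S.card = m) (τ : Perm (Fin m))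
    {i : ℕ} (hi : ¬ i < m) (hiN : i < N) :
    build hm S hS τ ⟨i, hiN⟩
      = Sᶜ.orderEmbOfFin (compl_card hS) ⟨i - m, by omega⟩ := by
  show buildFun hm S hS τ ⟨i, hiN⟩ = _
  unfold buildFun
  exact dif_neg hi

lemma build_alt (hm : m ≤ N) (S : Finset (Fin N)) (hS : S.card = m) (τ : Perm (Fin m))
    (hτ : IsAlternating τ) : AltP (build hm S hS τ) m := by
  intro i hi1
  have hi : i < m := by omega
  have hiN : i < N := by omega
  have hi1N : i + 1 < N := by omega
  have key : build hm S hS τ ⟨i, hiN⟩ < build hm S hS τ ⟨i + 1, hi1N⟩ ↔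
      τ ⟨i, hi⟩ < τ ⟨i + 1, hi1⟩ := by
    rw [build_eq_lt hm S hS τ hi hiN, build_eq_lt hm S hS τ hi1 hi1N]
    exact (S.orderEmbOfFin hS).lt_iff_lt
  have key2 : build hm S hS τ ⟨i + 1, hi1N⟩ < build hm S hS τ ⟨i, hiN⟩ ↔
      τ ⟨i + 1, hi1⟩ < τ ⟨i, hi⟩ := by
    rw [build_eq_lt hm S hS τ hi hiN, build_eq_lt hm S hS τ hi1 hi1N]
    exact (S.orderEmbOfFin hS).lt_iff_lt
  have hA := hτ ⟨i, hi⟩ hi1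
  by_cases he : i % 2 = 0
  · rw [if_pos he] at hA ⊢
    exact (s_lt_iff _ hiN hi1N).mpr (key.mpr hA)
  · rw [if_neg he] at hA ⊢
    exact (s_lt_iff _ hi1N hiN).mpr (key2.mpr hA)

lemma build_inc (hm : m ≤ N) (S : Finset (Fin N)) (hS : S.card = m) (τ : Perm (Fin m)) :
    IncF (build hm S hS τ) m := by
  intro i hmi hi1N
  have hiN : i < N := by omega
  rw [s_lt_iff _ hiN hi1N, build_eq_ge hm S hS τ (by omega) hiN,
    build_eq_ge hm S hS τ (by omega) hi1N]
  exact (Sᶜ.orderEmbOfFin (compl_card hS)).lt_iff_lt.mpr (by simp [Fin.lt_iff_val_lt_val]; omega)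

lemma incF_chain {N : ℕ} {σ : Perm (Fin N)} {m : ℕ} (hI : IncF σ m) :
    ∀ i j, m ≤ i → i < j → j < N → s σ i < s σ j := by
  intro i j hmi hij hjN
  induction j with
  | zero => omega
  | succ j ih =>
    rcases Nat.lt_or_ge i j with h | h
    · exact (ih (by omega) (by omega)).trans (hI j (by omega) hjN)
    · have : i = j := by omega
      subst this
      exact hI i hmi hjN

lemma build_mem_iff (hm : m ≤ N) (S : Finset (Fin N)) (hS : S.card = m) (τ : Perm (Fin m))
    (i : Fin N) : build hm S hS τ i ∈ S ↔ (i : ℕ) < m := by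
  constructor
  · intro h
    by_contra hi
    have := build_eq_ge hm S hS τ hi i.isLt
    rw [show (⟨(i : ℕ), i.isLt⟩ : Fin N) = i from Fin.ext rfl] at this
    rw [this] at h
    exact absurd h (Finset.mem_compl.mp (Sᶜ.orderEmbOfFin_mem (compl_card hS) _))
  · intro hi
    have := build_eq_lt hm S hS τ hi i.isLt
    rw [show (⟨(i : ℕ), i.isLt⟩ : Fin N) = i from Fin.ext rfl] at this
    rw [this]
    exact S.orderEmbOfFin_mem hS _

noncomputable def F (hm : m ≤ N) :
    ({S : Finset (Fin N) // S.card = m} × {τ : Perm (Fin m) // IsAlternating τ}) →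
      {σ : Perm (Fin N) // AltP σ m ∧ IncF σ m} :=
  fun p => ⟨build hm p.1.1 p.1.2 p.2.1,
    build_alt hm p.1.1 p.1.2 p.2.1 p.2.2, build_inc hm p.1.1 p.1.2 p.2.1⟩

lemma mem_iff_exists (hm : m ≤ N) (S : Finset (Fin N)) (hS : S.card = m) (τ : Perm (Fin m))
    (x : Fin N) : x ∈ S ↔ ∃ i : Fin N, (i : ℕ) < m ∧ build hm S hS τ i = x := by
  constructor
  · intro hx
    have : x ∈ Set.range (S.orderEmbOfFin hS) := by
      rw [Finset.range_orderEmbOfFin]; exact hx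
    obtain ⟨j, hj⟩ := this
    refine ⟨⟨(τ.symm j : ℕ), lt_of_lt_of_le (τ.symm j).isLt hm⟩, (τ.symm j).isLt, ?_⟩
    rw [build_eq_lt hm S hS τ (τ.symm j).isLt _]
    rw [show (⟨((τ.symm j : Fin m) : ℕ), (τ.symm j).isLt⟩ : Fin m) = τ.symm j from Fin.ext rfl]
    rw [Equiv.apply_symm_apply]
    exact hj
  · rintro ⟨i, hi, rfl⟩
    exact (build_mem_iff hm S hS τ i).mpr hi

lemma F_injective (hm : m ≤ N) : Function.Injective (F hm) := by
  rintro ⟨⟨S, hS⟩, ⟨τ, hτ⟩⟩ ⟨⟨S', hS'⟩, ⟨τ', hτ'⟩⟩ h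
  have hb : build hm S hS τ = build hm S' hS' τ' := congrArg Subtype.val h
  have hSS : S = S' := by
    ext x
    rw [mem_iff_exists hm S hS τ x, mem_iff_exists hm S' hS' τ' x, hb]
  subst hSS
  have hττ : τ = τ' := by
    apply Equiv.ext
    intro j
    apply (S.orderEmbOfFin hS).injective
    have h1 := build_eq_lt hm S hS τ j.isLt (lt_of_lt_of_le j.isLt hm)
    have h2 := build_eq_lt hm S hS' τ' j.isLt (lt_of_lt_of_le j.isLt hm)
    rw [show (⟨(j : ℕ), j.isLt⟩ : Fin m) = j from Fin.ext rfl] at h1 h2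
    rw [← h1, ← h2, hb]
  subst hττ
  rfl

lemma F_surjective (hm : m ≤ N) : Function.Surjective (F hm) := by
  rintro ⟨σ, hA, hI⟩
  classical
  set S : Finset (Fin N) := Finset.image (fun i : Fin m => σ (Fin.castLE hm i)) Finset.univ
    with hSdef
  have hinj : Function.Injective (fun i : Fin m => σ (Fin.castLE hm i)) :=
    σ.injective.comp (Fin.castLE_injective hm)
  have hS : S.card = m := by
    rw [hSdef, Finset.card_image_of_injective _ hinj, Finset.card_univ, Fintype.card_fin]
  have memS : ∀ i : Fin m, σ (Fin.castLE hm i) ∈ S := fun i =>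
    Finset.mem_image_of_mem _ (Finset.mem_univ i)
  set τ0 : Fin m → Fin m := fun i => (S.orderIsoOfFin hS).symm ⟨σ (Fin.castLE hm i), memS i⟩
    with hτ0
  have hτ0inj : Function.Injective τ0 := by
    intro a b hab
    simp only [hτ0] at hab
    have h2 := (S.orderIsoOfFin hS).toEquiv.symm.injective hab
    have h3 := Subtype.ext_iff.mp h2
    exact Fin.castLE_injective hm (σ.injective h3)
  set τ : Perm (Fin m) := Equiv.ofBijective τ0 ((Finite.injective_iff_bijective).1 hτ0inj)
    with hτdef
  have fact1 : ∀ i : Fin m, S.orderEmbOfFin hS (τ i) = σ (Fin.castLE hm i) := by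
    intro i
    have : (S.orderIsoOfFin hS (τ0 i) : Fin N) = σ (Fin.castLE hm i) := by
      rw [hτ0]
      simp only [OrderIso.apply_symm_apply]
    rw [← Finset.coe_orderIsoOfFin_apply]
    exact this
  have tlt : ∀ a b : Fin m, τ a < τ b ↔ s σ (a : ℕ) < s σ (b : ℕ) := by
    intro a b
    rw [← (S.orderEmbOfFin hS).lt_iff_lt, fact1, fact1,
      s_lt_iff σ (lt_of_lt_of_le a.isLt hm) (lt_of_lt_of_le b.isLt hm)]
    constructor
    · intro h
      rw [show Fin.castLE hm a = ⟨(a : ℕ), lt_of_lt_of_le a.isLt hm⟩ from Fin.ext rfl,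
        show Fin.castLE hm b = ⟨(b : ℕ), lt_of_lt_of_le b.isLt hm⟩ from Fin.ext rfl] at h
      exact h
    · intro h
      rw [show Fin.castLE hm a = ⟨(a : ℕ), lt_of_lt_of_le a.isLt hm⟩ from Fin.ext rfl,
        show Fin.castLE hm b = ⟨(b : ℕ), lt_of_lt_of_le b.isLt hm⟩ from Fin.ext rfl]
      exact h
  have hτalt : IsAlternating τ := by
    intro j hj
    have hAj := hA (j : ℕ) hj
    by_cases he : (j : ℕ) % 2 = 0
    · rw [if_pos he] at hAj ⊢
      have := (tlt j ⟨(j : ℕ) + 1, hj⟩).mpr hAj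
      exact this
    · rw [if_neg he] at hAj ⊢
      exact (tlt ⟨(j : ℕ) + 1, hj⟩ j).mpr hAj
  -- the tail of σ is the increasing enumeration of Sᶜ
  have hgmem : ∀ j : Fin (N - m), σ ⟨m + (j : ℕ), by have := j.isLt; omega⟩ ∈ Sᶜ := by
    intro j
    rw [Finset.mem_compl]
    intro hmem
    have hmem2 : σ ⟨m + (j : ℕ), by have := j.isLt; omega⟩ ∈
        Finset.image (fun i : Fin m => σ (Fin.castLE hm i)) Finset.univ := hmem
    obtain ⟨i, _, hieq⟩ := Finset.mem_image.mp hmem2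
    have := σ.injective hieq
    have : (Fin.castLE hm i : ℕ) = m + (j : ℕ) := congrArg Fin.val this
    have hi := i.isLt
    simp only [Fin.coe_castLE] at this
    omega
  have hgmono : StrictMono (fun j : Fin (N - m) =>
      σ ⟨m + (j : ℕ), by have := j.isLt; omega⟩) := by
    intro a b hab
    have hb := b.isLt
    have := incF_chain hI (m + (a : ℕ)) (m + (b : ℕ)) (by omega)
      (by exact Nat.add_lt_add_left hab m) (by omega)
    rw [s_lt_iff σ (by omega) (by omega)] at this
    exact this
  have huniq := Finset.orderEmbOfFin_unique (f := fun j : Fin (N - m) =>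
      σ ⟨m + (j : ℕ), by have := j.isLt; omega⟩) (compl_card hS) hgmem hgmono
  refine ⟨⟨⟨S, hS⟩, ⟨τ, hτalt⟩⟩, ?_⟩
  apply Subtype.ext
  apply Equiv.ext
  intro i
  show build hm S hS τ i = σ i
  by_cases hi : (i : ℕ) < m
  · have := build_eq_lt hm S hS τ hi i.isLt
    rw [show (⟨(i : ℕ), i.isLt⟩ : Fin N) = i from Fin.ext rfl] at this
    rw [this, fact1]
    exact congrArg σ (Fin.ext rfl)
  · have := build_eq_ge hm S hS τ hi i.isLt
    rw [show (⟨(i : ℕ), i.isLt⟩ : Fin N) = i from Fin.ext rfl] at this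
    rw [this, ← huniq]
    exact congrArg σ (Fin.ext (by show m + ((i : ℕ) - m) = (i : ℕ); omega))

lemma key_count (hm : m ≤ N) :
    Nat.card {σ : Perm (Fin N) // AltP σ m ∧ IncF σ m}
      = N.choose m * Nat.card {τ : Perm (Fin m) // IsAlternating τ} := by
  have e : ({S : Finset (Fin N) // S.card = m} × {τ : Perm (Fin m) // IsAlternating τ}) ≃
      {σ : Perm (Fin N) // AltP σ m ∧ IncF σ m} :=
    Equiv.ofBijective (F hm) ⟨F_injective hm, F_surjective hm⟩
  rw [← Nat.card_congr e, Nat.card_prod]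
  congr 1
  classical
  rw [Nat.card_eq_fintype_card, Fintype.card_finset_len, Fintype.card_fin]

end counting

section involution

variable {N : ℕ} {σ : Perm (Fin N)}

lemma stepUp {k : ℕ} (h : AltP σ (2 * k) ∧ IncF σ (2 * k)) (h2 : 2 * k + 2 ≤ N)
    (hd : k = 0 ∨ ¬ s σ (2 * k - 1) < s σ (2 * k)) :
    AltP σ (2 * k + 2) ∧ IncF σ (2 * k + 2) := by
  constructor
  · intro i hi1
    rcases Nat.lt_or_ge (i + 1) (2 * k) with hlt | hge
    · exact h.1 i hlt
    · rcases Nat.eq_or_lt_of_le hge with heq | hgt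
      · -- i + 1 = 2k, so i = 2k - 1 is odd, need descent
        have hk : 1 ≤ k := by omega
        have hi : i = 2 * k - 1 := by omega
        have hodd : ¬ i % 2 = 0 := by omega
        rw [if_neg hodd]
        rcases hd with h0 | hd
        · omega
        · have hle : s σ (2 * k) ≤ s σ (2 * k - 1) := Nat.le_of_not_lt hd
          have hne : s σ (2 * k) ≠ s σ (2 * k - 1) := by
            intro hcontra
            have := s_inj σ (by omega) (by omega) hcontra
            omega
          have : s σ (2 * k) < s σ (2 * k - 1) := lt_of_le_of_ne hle hne
          rw [hi]
          convert this using 2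
          omega
      · -- i + 1 = 2k + 1, so i = 2k is even, ascent from IncF
        have hi : i = 2 * k := by omega
        have heven : i % 2 = 0 := by omega
        rw [if_pos heven]
        subst hi
        exact h.2 (2 * k) (le_refl _) (by omega)
  · intro i hi hi1
    exact h.2 i (by omega) hi1

lemma stepDown {k : ℕ} (h : AltP σ (2 * k) ∧ IncF σ (2 * k)) (hk : 1 ≤ k) (h2k : 2 * k ≤ N)
    (ha : 2 * k = N ∨ s σ (2 * k - 1) < s σ (2 * k)) :
    AltP σ (2 * k - 2) ∧ IncF σ (2 * k - 2) := by
  constructor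
  · intro i hi1
    exact h.1 i (by omega)
  · intro i hi hi1
    rcases Nat.lt_or_ge i (2 * k) with hlt | hge
    · rcases Nat.eq_or_lt_of_le (show 2 * k - 2 ≤ i from hi) with heq | hgt
      · -- i = 2k - 2, ascent from AltP
        have halt := h.1 (2 * k - 2) (by omega)
        rw [if_pos (by omega)] at halt
        subst heq
        exact halt
      · -- i = 2k - 1
        have hi' : i = 2 * k - 1 := by omega
        rcases ha with hN | ha
        · omega
        · subst hi'
          have hrw : 2 * k - 1 + 1 = 2 * k := by omega
          rw [hrw]
          exact ha
    · exact h.2 i hge hi1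

/-- The sign-reversing involution on cut positions. -/
def gfun {N : ℕ} (σ : Perm (Fin N)) (k : ℕ) : ℕ :=
  if k = 0 then 1
  else if 2 * k = N then k - 1
  else if s σ (2 * k - 1) < s σ (2 * k) then k - 1 else k + 1

lemma gmain (hN2 : 2 ≤ N) (hNe : N % 2 = 0) {k : ℕ} (hk2 : 2 * k ≤ N)
    (hc : AltP σ (2 * k) ∧ IncF σ (2 * k)) :
    2 * gfun σ k ≤ N ∧ (AltP σ (2 * gfun σ k) ∧ IncF σ (2 * gfun σ k)) ∧
      gfun σ (gfun σ k) = k ∧ (gfun σ k = k + 1 ∨ (1 ≤ k ∧ gfun σ k = k - 1)) := by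
  by_cases hk0 : k = 0
  · subst hk0
    have hg : gfun σ 0 = 1 := by simp [gfun]
    rw [hg]
    have hvalid := stepUp (k := 0) hc (by omega) (Or.inl rfl)
    refine ⟨by omega, by simpa using hvalid, ?_, Or.inl rfl⟩
    -- gfun σ 1 = 0
    unfold gfun
    rw [if_neg (by omega)]
    by_cases hN : 2 * 1 = N
    · rw [if_pos hN]
    · rw [if_neg hN]
      have : s σ 1 < s σ 2 := hc.2 1 (by omega) (by omega)
      rw [if_pos (by simpa using this)]
  · by_cases hN : 2 * k = N
    · have hg : gfun σ k = k - 1 := by rw [gfun, if_neg hk0, if_pos hN]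
      rw [hg]
      have hvalid := stepDown hc (by omega) hk2 (Or.inl hN)
      have hrw : 2 * (k - 1) = 2 * k - 2 := by omega
      refine ⟨by omega, by rw [hrw]; exact hvalid, ?_, Or.inr ⟨by omega, rfl⟩⟩
      unfold gfun
      by_cases hk1 : k - 1 = 0
      · rw [if_pos hk1]; omega
      · rw [if_neg hk1, if_neg (by omega)]
        have hdesc := hc.1 (2 * k - 3) (by omega)
        rw [if_neg (by omega)] at hdesc
        have h1 : 2 * k - 3 + 1 = 2 * k - 2 := by omega
        rw [h1] at hdesc
        rw [if_neg (by
          have h2 : 2 * (k - 1) - 1 = 2 * k - 3 := by omega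
          have h3 : 2 * (k - 1) = 2 * k - 2 := by omega
          rw [h2, h3]
          exact Nat.not_lt.mpr (Nat.le_of_lt hdesc))]
        omega
    · by_cases hasc : s σ (2 * k - 1) < s σ (2 * k)
      · have hg : gfun σ k = k - 1 := by rw [gfun, if_neg hk0, if_neg hN, if_pos hasc]
        rw [hg]
        have hvalid := stepDown hc (by omega) hk2 (Or.inr hasc)
        have hrw : 2 * (k - 1) = 2 * k - 2 := by omega
        refine ⟨by omega, by rw [hrw]; exact hvalid, ?_, Or.inr ⟨by omega, rfl⟩⟩
        unfold gfun
        by_cases hk1 : k - 1 = 0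
        · rw [if_pos hk1]; omega
        · rw [if_neg hk1, if_neg (by omega)]
          have hdesc := hc.1 (2 * k - 3) (by omega)
          rw [if_neg (by omega)] at hdesc
          have h1 : 2 * k - 3 + 1 = 2 * k - 2 := by omega
          rw [h1] at hdesc
          rw [if_neg (by
            have h2 : 2 * (k - 1) - 1 = 2 * k - 3 := by omega
            have h3 : 2 * (k - 1) = 2 * k - 2 := by omega
            rw [h2, h3]
            exact Nat.not_lt.mpr (Nat.le_of_lt hdesc))]
          omega
      · have hg : gfun σ k = k + 1 := by rw [gfun, if_neg hk0, if_neg hN, if_neg hasc]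
        rw [hg]
        have h22 : 2 * k + 2 ≤ N := by omega
        have hvalid := stepUp hc h22 (Or.inr hasc)
        have hrw : 2 * (k + 1) = 2 * k + 2 := by omega
        refine ⟨by omega, by rw [hrw]; exact hvalid, ?_, Or.inl rfl⟩
        unfold gfun
        rw [if_neg (by omega)]
        by_cases hN' : 2 * (k + 1) = N
        · rw [if_pos hN']; omega
        · rw [if_neg hN']
          have hasc' : s σ (2 * k + 1) < s σ (2 * k + 2) :=
            hc.2 (2 * k + 1) (by omega) (by omega)
          rw [if_pos (by
            have h2 : 2 * (k + 1) - 1 = 2 * k + 1 := by omega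
            have h3 : 2 * (k + 1) = 2 * k + 2 := by omega
            rw [h2, h3]
            exact hasc')]
          omega

end involution

section assemble

open Finset
open scoped Classical

lemma invol_sum (n : ℕ) (hn : 1 ≤ n) (σ : Perm (Fin (2 * n))) :
    ∑ k ∈ (range (n + 1)).filter
      (fun k => AltP σ (2 * k) ∧ IncF σ (2 * k)), ((-1 : ℤ)) ^ k = 0 := by
  classical
  apply Finset.sum_involution (fun k _ => gfun σ k)
  · intro a ha
    rw [Finset.mem_filter, Finset.mem_range] at ha
    obtain ⟨-, hor⟩ := (gmain (σ := σ) (by omega) (by omega) (by omega) ha.2).2.2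
    rcases hor with h | ⟨h1, h2⟩
    · rw [h, pow_succ]; ring
    · have hpow : (-1 : ℤ) ^ a = -(-1 : ℤ) ^ (a - 1) := by
        conv_lhs => rw [show a = (a - 1) + 1 by omega]
        rw [pow_succ]
        ring
      rw [h2, hpow]; ring
  · intro a ha _
    rw [Finset.mem_filter, Finset.mem_range] at ha
    obtain ⟨-, hor⟩ := (gmain (σ := σ) (by omega) (by omega) (by omega) ha.2).2.2
    omega
  · intro a ha
    rw [Finset.mem_filter, Finset.mem_range] at ha ⊢
    obtain ⟨h1, h2, -⟩ := gmain (σ := σ) (by omega) (by omega) (by omega) ha.2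
    exact ⟨by omega, h2⟩
  · intro a ha
    rw [Finset.mem_filter, Finset.mem_range] at ha
    exact (gmain (σ := σ) (by omega) (by omega) (by omega) ha.2).2.2.1

lemma count_eq (n k : ℕ) (hk : k ≤ n) :
    ((univ : Finset (Perm (Fin (2 * n)))).filter
        (fun σ => AltP σ (2 * k) ∧ IncF σ (2 * k))).card
      = (2 * n).choose (2 * k) * zigzag (2 * k) := by
  have h1 := key_count (N := 2 * n) (m := 2 * k) (by omega)
  rw [← Fintype.card_subtype, ← Nat.card_eq_fintype_card, h1]
  rfl

lemma key_sum (n : ℕ) (hn : 1 ≤ n) :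
    ∑ k ∈ range (n + 1),
      (-1 : ℤ) ^ k * ((2 * n).choose (2 * k) * zigzag (2 * k) : ℕ) = 0 := by
  have h1 : ∀ k ∈ range (n + 1),
      (-1 : ℤ) ^ k * ((2 * n).choose (2 * k) * zigzag (2 * k) : ℕ)
        = ∑ σ ∈ (univ : Finset (Perm (Fin (2 * n)))),
            (if AltP σ (2 * k) ∧ IncF σ (2 * k) then (-1 : ℤ) ^ k else 0) := by
    intro k hk
    rw [Finset.mem_range] at hk
    rw [Finset.sum_ite, Finset.sum_const_zero, add_zero, Finset.sum_const, nsmul_eq_mul,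
      count_eq n k (by omega)]
    push_cast
    ring
  rw [Finset.sum_congr rfl h1, Finset.sum_comm]
  apply Finset.sum_eq_zero
  intro σ _
  rw [← Finset.sum_filter]
  exact invol_sum n hn σ

end assemble



lemma zigzag_zero : zigzag 0 = 1 := by
  have hsub : Subsingleton (Perm (Fin 0)) := ⟨fun a b => Equiv.ext fun x => x.elim0⟩
  have halt : IsAlternating (1 : Perm (Fin 0)) := fun i _ => i.elim0
  rw [zigzag, Nat.card_eq_one_iff_unique]
  exact ⟨⟨fun a b => Subtype.ext (hsub.allEq _ _)⟩, ⟨⟨1, halt⟩⟩⟩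

lemma euler_eq (n : ℕ) : eulerNumber n = (-1 : ℤ) ^ n * (zigzag (2 * n) : ℤ) := by
  induction n using Nat.strong_induction_on with
  | _ n ih =>
    cases n with
    | zero =>
      show eulerNumber 0 = _
      rw [show eulerNumber 0 = 1 by rw [eulerNumber]]
      norm_num [zigzag_zero]
    | succ n =>
      have hkey := key_sum (n + 1) (by omega)
      rw [Finset.sum_range_succ, Nat.choose_self, one_mul] at hkey
      have hmain : ∑ k ∈ range (n + 1),
          (-1 : ℤ) ^ k * ((2 * (n + 1)).choose (2 * k) * zigzag (2 * k) : ℕ)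
            = -((-1 : ℤ) ^ (n + 1) * (zigzag (2 * (n + 1)) : ℕ)) := by
        push_cast at hkey ⊢
        linarith
      rw [eulerNumber]
      rw [Finset.sum_attach (range (n + 1))
        (fun k => (Nat.choose (2 * (n + 1)) (2 * k) : ℤ) * eulerNumber k)]
      have hcongr : ∑ k ∈ range (n + 1),
          (Nat.choose (2 * (n + 1)) (2 * k) : ℤ) * eulerNumber k
            = ∑ k ∈ range (n + 1),
          (-1 : ℤ) ^ k * ((2 * (n + 1)).choose (2 * k) * zigzag (2 * k) : ℕ) := by
        apply Finset.sum_congr rfl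
        intro k hk
        rw [Finset.mem_range] at hk
        rw [ih k (by omega)]
        push_cast
        ring
      rw [hcongr, hmain]
      push_cast
      ring

end ZZ


/-- `A_{2n} = |E_{2n}|`, the absolute Euler (secant) numbers. -/
theorem zigzag_even_eq_abs_euler (n : ℕ) :
    zigzag (2 * n) = (eulerNumber n).natAbs := by
  rw [ZZ.euler_eq]
  rw [Int.natAbs_mul, Int.natAbs_pow]
  simp
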